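/- arXiv:1803.09418 — 5 statements merged into one kernel-verified Lean document; each statement's English description precedes it below -/
import Mathlib

section
/- Let A be a finite dimensional central simple algebra with 1 over a field F and let σ, τ be nonzero F-algebra endomorphisms of A. Then for any F-linear (σ,τ)-derivation δ of A, there exist units v₁, v₂ in A and an element u ∈ A such that δ(a) = v₁(ua − au)v₂ for all a ∈ A. -/
/-!
For a central simple algebra the map `A ⊗ Aᵐᵒᵖ → End_F A`, `a ⊗ b ↦ (x ↦ a x b)`, is bijective
(Jacobson density and a dimension count). Hence there is a separability element
`r = ∑ aᵢ ⊗ bᵢ` with `∑ aᵢ bᵢ = 1` and `(c ⊗ 1) r = (1 ⊗ c) r` for all `c`. Evaluating this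
identity under `a ⊗ b ↦ δ a * τ b` shows that every `(σ, τ)`-derivation is of the form
`δ a = w τ(a) - σ(a) w`. Evaluating it under `a ⊗ b ↦ σ a * x * b` yields a nonzero `s` with
`σ(a) s = s a`; its right annihilator is a proper two-sided ideal, so `s` is a unit and
`σ = s (·) s⁻¹` (Skolem–Noether). With `τ = t (·) t⁻¹` as well, `δ a = s (u a - a u) t⁻¹`
for `u = s⁻¹ w t`.
-/

open TensorProduct MulOpposite

attribute [local instance] instModuleTensorProductMop

section Bimodule

variable {R A : Type*} [CommRing R] [Ring A] [Algebra R A]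

theorem tmul_smul_eq_mul_mul (a : A) (b : Aᵐᵒᵖ) (x : A) :
    (a ⊗ₜ[R] b) • x = a * x * b.unop :=
  AlgHom.mulLeftRight_apply R A a b x

theorem isSimpleModule_tensorProduct_mop [IsSimpleRing A] :
    IsSimpleModule (A ⊗[R] Aᵐᵒᵖ) A := by
  refine (isSimpleModule_iff _ _).2 ⟨fun N ↦ ?_⟩
  let I : TwoSidedIdeal A := .mk' N N.zero_mem N.add_mem N.neg_mem
    (fun {a x} hx ↦ by simpa [tmul_smul_eq_mul_mul] using N.smul_mem (a ⊗ₜ[R] 1) hx)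
    (fun {x b} hx ↦ by simpa [tmul_smul_eq_mul_mul] using N.smul_mem (1 ⊗ₜ[R] op b) hx)
  have hI : ∀ x, x ∈ I ↔ x ∈ N := TwoSidedIdeal.mem_mk' _ _ _ _ _ _
  rcases IsSimpleRing.simple.eq_bot_or_eq_top I with h | h
  · left
    ext x
    rw [← hI, h, TwoSidedIdeal.mem_bot, Submodule.mem_bot]
  · right
    ext x
    rw [← hI, h]
    simp

theorem Algebra.IsCentral.exists_eq_smul_of_linearMap_tensorProduct_mop [Algebra.IsCentral R A]
    (f : A →ₗ[A ⊗[R] Aᵐᵒᵖ] A) : ∃ c : R, ∀ x, f x = c • x := by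
  have hleft (x : A) : f x = x * f 1 := by
    simpa [tmul_smul_eq_mul_mul] using f.map_smul (x ⊗ₜ[R] 1) 1
  have hright (x : A) : f x = f 1 * x := by
    simpa [tmul_smul_eq_mul_mul] using f.map_smul (1 ⊗ₜ[R] op x) 1
  obtain ⟨c, hc⟩ := (Algebra.IsCentral.mem_center_iff R).1 <|
    Subalgebra.mem_center_iff.2 fun x ↦ (hleft x).symm.trans (hright x)
  exact ⟨c, fun x ↦ by rw [hright, hc, Algebra.smul_def]⟩

end Bimodule

theorem IsSimpleRing.isUnit_of_forall_mul_eq_mul {A : Type*} [Ring A] [IsSimpleRing A]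
    [IsArtinianRing Aᵐᵒᵖ] (f : A → A) {s : A} (hs : s ≠ 0) (h : ∀ a, f a * s = s * a) :
    IsUnit s := by
  let I : TwoSidedIdeal A := .mk' {x | s * x = 0} (mul_zero s)
    (fun hx hy ↦ by simp_all [mul_add]) (fun hx ↦ by simp_all)
    (fun {a x} (hx : s * x = 0) ↦ show s * (a * x) = 0 by
      rw [← mul_assoc, ← h, mul_assoc, hx, mul_zero])
    (fun {x b} (hx : s * x = 0) ↦ show s * (x * b) = 0 by rw [← mul_assoc, hx, zero_mul])
  have hI : I = ⊥ := (IsSimpleRing.simple.eq_bot_or_eq_top I).resolve_right fun htop ↦ by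
    have : (1 : A) ∈ I := by rw [htop]; trivial
    exact hs (by simpa [I] using this)
  refine IsArtinianRing.isUnit_iff_isLeftRegular.2 fun x y hxy ↦ sub_eq_zero.1 ?_
  have : x - y ∈ I := by simpa [I, mul_sub, sub_eq_zero] using hxy
  rwa [hI, TwoSidedIdeal.mem_bot] at this

section Field

variable {F A : Type*} [Field F] [Ring A] [Algebra F A]

section CentralSimple

variable [Algebra.IsCentral F A] [IsSimpleRing A] [FiniteDimensional F A]

theorem AlgHom.mulLeftRight_surjective : Function.Surjective (AlgHom.mulLeftRight F A) := by
  classical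
  have := isSimpleModule_tensorProduct_mop (R := F) (A := A)
  intro φ
  let φ' : Module.End (Module.End (A ⊗[F] Aᵐᵒᵖ) A) A :=
    { toFun := φ
      map_add' := φ.map_add
      map_smul' := fun ψ x ↦ by
        obtain ⟨c, hc⟩ := Algebra.IsCentral.exists_eq_smul_of_linearMap_tensorProduct_mop ψ
        simp only [Module.End.smul_def, hc, map_smul, RingHom.id_apply] }
  let b := Module.finBasis F A
  obtain ⟨r, hr⟩ := jacobson_density φ' (Finset.univ.image b)
  exact ⟨r, b.ext fun i ↦ (hr (b i) (Finset.mem_image_of_mem b (Finset.mem_univ i))).symm⟩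

theorem AlgHom.mulLeftRight_bijective : Function.Bijective (AlgHom.mulLeftRight F A) := by
  have hdim : Module.finrank F (A ⊗[F] Aᵐᵒᵖ) = Module.finrank F (Module.End F A) := by
    rw [Module.finrank_tensorProduct, Module.finrank_linearMap, (opLinearEquiv F).finrank_eq]
  refine ⟨?_, AlgHom.mulLeftRight_surjective⟩
  exact (LinearMap.injective_iff_surjective_of_finrank_eq_finrank hdim
    (f := (AlgHom.mulLeftRight F A).toLinearMap)).2 AlgHom.mulLeftRight_surjective

instance IsAzumaya.of_isCentral_isSimpleRing : IsAzumaya F A where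
  bij := AlgHom.mulLeftRight_bijective

end CentralSimple

section Azumaya

variable [IsAzumaya F A]

theorem IsAzumaya.exists_separabilityElement :
    ∃ r : A ⊗[F] Aᵐᵒᵖ, AlgHom.mulLeftRight F A r 1 = 1 ∧
      ∀ c : A, (c ⊗ₜ[F] 1) * r = (1 ⊗ₜ[F] op c) * r := by
  have : Nontrivial A := (FaithfulSMul.algebraMap_injective F A).nontrivial
  obtain ⟨ψ, hψ⟩ := Module.Projective.exists_dual_eq_one F (one_ne_zero (α := A))
  -- `r` acts as `x ↦ ψ x • 1`, whose values are central
  obtain ⟨r, hr⟩ := IsAzumaya.bij.2 (ψ.smulRight 1)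
  refine ⟨r, by simp [hr, hψ], fun c ↦ IsAzumaya.bij.1 <| LinearMap.ext fun x ↦ ?_⟩
  simp [hr, Module.End.mul_apply]

theorem IsAzumaya.exists_eq_mul_sub_mul_of_map_mul {B : Type*} [Ring B] [Algebra F B]
    (σ τ : A →ₐ[F] B) (δ : A →ₗ[F] B) (hδ : ∀ a b, δ (a * b) = δ a * τ b + σ a * δ b) :
    ∃ w : B, ∀ a, δ a = w * τ a - σ a * w := by
  obtain ⟨r, hr1, hr⟩ := IsAzumaya.exists_separabilityElement (F := F) (A := A)
  let m : A ⊗[F] Aᵐᵒᵖ →ₗ[F] B :=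
    LinearMap.mul' F B ∘ₗ TensorProduct.map δ (τ.toLinearMap ∘ₗ (opLinearEquiv F).symm.toLinearMap)
  have hm (a : A) (b : Aᵐᵒᵖ) : m (a ⊗ₜ b) = δ a * τ b.unop := by simp [m]
  have hleft (c : A) (s : A ⊗[F] Aᵐᵒᵖ) :
      m ((c ⊗ₜ[F] 1) * s) = δ c * τ (AlgHom.mulLeftRight F A s 1) + σ c * m s := by
    induction s using TensorProduct.induction_on with
    | zero => simp
    | tmul a b => simp [hm, hδ, add_mul, mul_assoc]
    | add s t hs ht => simp only [mul_add, map_add, LinearMap.add_apply, hs, ht]; abel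
  have hright (c : A) (s : A ⊗[F] Aᵐᵒᵖ) : m ((1 ⊗ₜ[F] op c) * s) = m s * τ c := by
    induction s using TensorProduct.induction_on with
    | zero => simp
    | tmul a b => simp [hm, mul_assoc]
    | add s t hs ht => simp only [mul_add, map_add, add_mul, hs, ht]
  refine ⟨m r, fun a ↦ ?_⟩
  have h := (hleft a r).symm.trans ((congrArg m (hr a)).trans (hright a r))
  rw [hr1, map_one, mul_one] at h
  rw [← h, add_sub_cancel_right]

theorem AlgHom.exists_unit_apply_eq_mul_mul_inv [IsSimpleRing A] (σ : A →ₐ[F] A) :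
    ∃ s : Aˣ, ∀ a, σ a = s * a * ↑s⁻¹ := by
  have hσ : Function.Bijective σ :=
    ⟨(σ : A →+* A).injective,
      LinearMap.injective_iff_surjective (f := σ.toLinearMap).1 (σ : A →+* A).injective⟩
  let Φ := (AlgHom.mulLeftRight F A).comp
    (Algebra.TensorProduct.congr (AlgEquiv.ofBijective σ hσ) AlgEquiv.refl).toAlgHom
  have hΦ (a : A) (b : Aᵐᵒᵖ) (x : A) : Φ (a ⊗ₜ b) x = σ a * x * b.unop := by simp [Φ]
  obtain ⟨r, hr1, hr⟩ := IsAzumaya.exists_separabilityElement (F := F) (A := A)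
  have hr0 : Φ r ≠ 0 := by
    have hΦinj : Function.Injective Φ := IsAzumaya.bij.1.comp (AlgEquiv.injective _)
    refine (map_ne_zero_iff _ hΦinj).2 fun h ↦ ?_
    simp [h] at hr1
  obtain ⟨x, hx⟩ := DFunLike.ne_iff.1 hr0
  have key (c : A) : σ c * Φ r x = Φ r x * c := by
    simpa [Module.End.mul_apply, hΦ] using congrArg (Φ · x) (hr c)
  have : IsArtinianRing Aᵐᵒᵖ := IsArtinianRing.of_finite F Aᵐᵒᵖ
  obtain ⟨s, hs⟩ := IsSimpleRing.isUnit_of_forall_mul_eq_mul σ hx key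
  exact ⟨s, fun a ↦ (Units.eq_mul_inv_iff_mul_eq s).2 (hs ▸ key a)⟩

end Azumaya

end Field

theorem stmt_7_general {F A : Type*} [Field F] [Ring A] [Algebra F A]
    [Algebra.IsCentral F A] [IsSimpleRing A] [FiniteDimensional F A]
    (σ τ : A →ₐ[F] A)
    (δ : A →ₗ[F] A)
    (hδ : ∀ a b : A, δ (a * b) = δ a * τ b + σ a * δ b) :
    ∃ (v₁ v₂ : Aˣ) (u : A), ∀ a : A, δ a = (v₁ : A) * (u * a - a * u) * (v₂ : A) := by
  obtain ⟨w, hw⟩ := IsAzumaya.exists_eq_mul_sub_mul_of_map_mul σ τ δ hδ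
  obtain ⟨s, hs⟩ := σ.exists_unit_apply_eq_mul_mul_inv
  obtain ⟨t, ht⟩ := τ.exists_unit_apply_eq_mul_mul_inv
  refine ⟨s, t⁻¹, ↑s⁻¹ * w * t, fun a ↦ ?_⟩
  simp only [hw, hs, ht, mul_sub, sub_mul, mul_assoc, Units.mul_inv_cancel_left, Units.mul_inv,
    mul_one]

theorem stmt_7 {F A : Type*} [Field F] [Ring A] [Algebra F A]
    [Algebra.IsCentral F A] [IsSimpleRing A] [FiniteDimensional F A]
    (σ τ : A →ₐ[F] A) (hσ : ⇑σ ≠ 0) (hτ : ⇑τ ≠ 0)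
    (δ : A →ₗ[F] A)
    (hδ : ∀ a b : A, δ (a * b) = δ a * τ b + σ a * δ b) :
    ∃ (v₁ v₂ : Aˣ) (u : A), ∀ a : A, δ a = (v₁ : A) * (u * a - a * u) * (v₂ : A) :=
  stmt_7_general σ τ δ hδ
end

section
/- Let G be a finite group and R a field of characteristic p ≥ 0 such that p does not divide |G|. Let σ and τ be R-algebra endomorphisms of the group ring RG that fix the center Z(RG) elementwise. Then every (σ,τ)-derivation δ of RG is (σ,τ)-inner: there exists x ∈ RG with δ(a) = xτ(a) − σ(a)x for all a ∈ RG. -/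
/-!
Averaging over the group: for `S = ∑_g δ(g) τ(g⁻¹)`, reindexing `g ↦ hg` and applying the twisted
Leibniz rule to `δ(hg)` gives `S τ(h) = |G| δ(h) + σ(h) S`. Since `|G|` is invertible in `R`,
`x = |G|⁻¹ S` satisfies `δ(g) = x τ(g) - σ(g) x` on group elements, hence on all of `RG` by linearity.
-/

open Finset

theorem sum_mul_inv_mul_eq_card_smul_add {A G : Type*} [Semiring A] [Group G] [Fintype G]
    (d s : G → A) (t : G →* A) (hd : ∀ g h, d (g * h) = d g * t h + s g * d h) (h : G) :
    (∑ g, d g * t g⁻¹) * t h = Fintype.card G • d h + s h * ∑ g, d g * t g⁻¹ :=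
  calc (∑ g, d g * t g⁻¹) * t h = ∑ g, d g * t (g⁻¹ * h) := by
        simp only [sum_mul, mul_assoc, map_mul]
    _ = ∑ g, d (h * g) * t g⁻¹ :=
        (Fintype.sum_equiv (Equiv.mulLeft h) _ _ fun g => by simp [mul_assoc]).symm
    _ = ∑ g, (d h + s h * (d g * t g⁻¹)) := by
        refine sum_congr rfl fun g _ => ?_
        rw [hd, add_mul, mul_assoc, ← map_mul, mul_inv_cancel, map_one, mul_one, mul_assoc]
    _ = Fintype.card G • d h + s h * ∑ g, d g * t g⁻¹ := by
        rw [sum_add_distrib, sum_const, card_univ, mul_sum]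

theorem stmt_15_general {R G : Type*} [Field R] [Group G] [Fintype G]
    (hchar : ¬ (ringChar R ∣ Fintype.card G))
    (σ τ : MonoidAlgebra R G →ₐ[R] MonoidAlgebra R G)
    (δ : MonoidAlgebra R G →ₗ[R] MonoidAlgebra R G)
    (hδ : ∀ a b : MonoidAlgebra R G, δ (a * b) = δ a * τ b + σ a * δ b) :
    ∃ x : MonoidAlgebra R G, ∀ a : MonoidAlgebra R G, δ a = x * τ a - σ a * x := by
  have hcard : (Fintype.card G : R) ≠ 0 := fun h => hchar ((ringChar.spec R _).mp h)
  let of := MonoidAlgebra.of R G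
  set S := ∑ g, δ (of g) * τ (of g⁻¹)
  have hS (g : G) : S * τ (of g) = (Fintype.card G : R) • δ (of g) + σ (of g) * S := by
    rw [Nat.cast_smul_eq_nsmul R]
    have averaged := sum_mul_inv_mul_eq_card_smul_add (δ ∘ of) (σ ∘ of) ((τ : _ →* _).comp of)
      (fun g h => by simp only [Function.comp_apply, MonoidHom.comp_apply, map_mul, hδ]; rfl) g
    exact averaged
  set x := (Fintype.card G : R)⁻¹ • S
  refine ⟨x, fun a => ?_⟩
  suffices δ = LinearMap.mulLeft R x ∘ₗ τ.toLinearMap - LinearMap.mulRight R x ∘ₗ σ.toLinearMap by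
    simp [this]
  refine MonoidAlgebra.lhom_ext' fun g => LinearMap.ext_ring ?_
  have hof : MonoidAlgebra.lsingle (R := R) g (1 : R) = of g := rfl
  simp only [LinearMap.comp_apply, hof, LinearMap.sub_apply, AlgHom.toLinearMap_apply,
    LinearMap.mulLeft_apply, LinearMap.mulRight_apply, x, smul_mul_assoc, mul_smul_comm,
    ← smul_sub, hS, add_sub_cancel_right, smul_smul, inv_mul_cancel₀ hcard, one_smul]

theorem stmt_15 {R G : Type*} [Field R] [Group G] [Fintype G]
    (hchar : ¬ (ringChar R ∣ Fintype.card G))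
    (σ τ : MonoidAlgebra R G →ₐ[R] MonoidAlgebra R G)
    (hσ : ∀ z ∈ Subalgebra.center R (MonoidAlgebra R G), σ z = z)
    (hτ : ∀ z ∈ Subalgebra.center R (MonoidAlgebra R G), τ z = z)
    (δ : MonoidAlgebra R G →ₗ[R] MonoidAlgebra R G)
    (hδ : ∀ a b : MonoidAlgebra R G, δ (a * b) = δ a * τ b + σ a * δ b) :
    ∃ x : MonoidAlgebra R G, ∀ a : MonoidAlgebra R G, δ a = x * τ a - σ a * x :=
  stmt_15_general hchar σ τ δ hδ
end

section
/- Let G be a finite group and R an integral domain with 1 of characteristic p ≥ 0 with p not dividing |G|. Let σ, τ be R-linear extensions of group homomorphisms of G that fix Z(RG) elementwise. Then every (σ,τ)-derivation of RG is (σ,τ)-inner. -/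
/-!
For `g ∈ G` the coefficients of `δ(g) τ(g)⁻¹` form a 1-cocycle of `G` with values in the
permutation module `R^G`, where `G` permutes the basis by `g • k = φ(g) k ψ(g)⁻¹`. On the
stabiliser of a basis element `k` the cocycle is additive, so `|G|` kills its value at `k`; since
`|G|` is a nonzerodivisor in the domain `R`, the cocycle vanishes on stabilisers. Such a cocycle is
a coboundary, built orbit by orbit from chosen representatives, and a primitive `x` satisfies
`δ(g) = x τ(g) - σ(g) x` on the group basis, hence everywhere by linearity.
-/

open groupCohomology MulAction

attribute [local instance] arrowAction

section PermutationModule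

variable {G X A : Type*} [Group G] [MulAction G X]

theorem arrowAction_smul_apply (g : G) (b : X → A) (x : X) : (g • b) x = b (g⁻¹ • x) := rfl

variable [AddCommGroup A] {f : G → X → A}

theorem isCocycle₁_apply_mul (hf : IsCocycle₁ f) (g h : G) (x : X) :
    f (g * h) x = f h (g⁻¹ • x) + f g x := by
  rw [hf, Pi.add_apply, arrowAction_smul_apply]

theorem isCocycle₁_apply_pow_of_smul_eq (hf : IsCocycle₁ f) {w : G} {x : X} (hw : w • x = x)
    (n : ℕ) : f (w ^ n) x = n • f w x := by
  induction n with
  | zero => simp [map_one_of_isCocycle₁ hf]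
  | succ n ih =>
    rw [pow_succ', isCocycle₁_apply_mul hf, inv_smul_eq_iff.mpr hw.symm, ih, succ_nsmul, add_comm]

theorem isCocycle₁_apply_eq_zero_of_smul_eq [Finite G] (hA : IsSMulRegular A (Nat.card G))
    (hf : IsCocycle₁ f) {w : G} {x : X} (hw : w • x = x) : f w x = 0 := by
  refine hA (?_ : Nat.card G • f w x = Nat.card G • 0)
  rw [smul_zero, ← isCocycle₁_apply_pow_of_smul_eq hf hw, pow_card_eq_one',
    map_one_of_isCocycle₁ hf, Pi.zero_apply]

theorem isCoboundary₁_of_isCocycle₁ [Finite G] (hA : IsSMulRegular A (Nat.card G))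
    (hf : IsCocycle₁ f) : IsCoboundary₁ f := by
  have hrep (x : X) : ∃ t : G, t • (⟦x⟧ : orbitRel.Quotient G X).out = x :=
    mem_orbit_symm.mp (orbitRel_apply.mp (Quotient.mk_out x))
  choose t ht using hrep
  refine ⟨fun x => -f (t x) x, fun g => funext fun x => ?_⟩
  set x' := g⁻¹ • x
  have hrep' : (⟦x'⟧ : orbitRel.Quotient G X).out = (⟦x⟧ : orbitRel.Quotient G X).out := by
    rw [orbitRel.Quotient.quotient_smul_eq]
  have hfix : ((t x)⁻¹ * g * t x') • (⟦x⟧ : orbitRel.Quotient G X).out =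
      (⟦x⟧ : orbitRel.Quotient G X).out := by
    rw [mul_smul, mul_smul, ← hrep', ht x', smul_inv_smul, inv_smul_eq_iff, hrep', ht]
  have key := isCocycle₁_apply_mul hf (t x) ((t x)⁻¹ * g * t x') x
  rw [show t x * ((t x)⁻¹ * g * t x') = g * t x' by group, isCocycle₁_apply_mul hf,
    inv_smul_eq_iff.mpr (ht x).symm, isCocycle₁_apply_eq_zero_of_smul_eq hA hf hfix,
    zero_add] at key
  rw [Pi.sub_apply, arrowAction_smul_apply, ← key]
  abel

end PermutationModule

/-- The action `g • k = φ g * k * (ψ g)⁻¹`, by which `a ↦ σ(g) a τ(g)⁻¹` permutes the basis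
of `R[G]`. -/
def TwistedConj {G : Type*} [Group G] (_φ _ψ : G →* G) : Type _ := G

namespace TwistedConj

variable {G : Type*} [Group G] {φ ψ : G →* G}

def mk : G ≃ TwistedConj φ ψ := Equiv.refl G

instance : MulAction G (TwistedConj φ ψ) where
  smul g k := mk (φ g * mk.symm k * (ψ g)⁻¹)
  one_smul k := by
    change mk (φ 1 * mk.symm k * (ψ 1)⁻¹) = k
    simp
  mul_smul g h k := by
    change mk (φ (g * h) * mk.symm k * (ψ (g * h))⁻¹) =
      mk (φ g * mk.symm (mk (φ h * mk.symm k * (ψ h)⁻¹)) * (ψ g)⁻¹)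
    simp only [map_mul, Equiv.symm_apply_apply]
    congr 1
    group

theorem mk_symm_inv_smul (g : G) (k : TwistedConj φ ψ) :
    mk.symm (g⁻¹ • k) = (φ g)⁻¹ * mk.symm k * ψ g := by
  change mk.symm (mk (φ g⁻¹ * mk.symm k * (ψ g⁻¹)⁻¹)) = _
  simp

end TwistedConj

open MonoidAlgebra

section TwistedDerivation

variable {R G : Type*} [CommRing R] [Group G] {φ ψ : G →* G}
  {σ τ : MonoidAlgebra R G →ₐ[R] MonoidAlgebra R G} {δ : MonoidAlgebra R G →ₗ[R] MonoidAlgebra R G}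

variable (φ ψ δ) in
/-- The coefficients of `δ(g) τ(g)⁻¹`. -/
noncomputable def derivationCocycle (g : G) (k : TwistedConj φ ψ) : R :=
  (δ (of R G g)).coeff (TwistedConj.mk.symm k * ψ g)

theorem isCocycle₁_derivationCocycle
    (hσof : ∀ g : G, σ (of R G g) = of R G (φ g)) (hτof : ∀ g : G, τ (of R G g) = of R G (ψ g))
    (hδ : ∀ a b, δ (a * b) = δ a * τ b + σ a * δ b) :
    IsCocycle₁ (derivationCocycle φ ψ δ) := by
  refine fun g h => funext fun k => ?_
  rw [Pi.add_apply, arrowAction_smul_apply]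
  simp only [derivationCocycle]
  rw [map_mul (of R G), hδ, hσof, hτof, of_apply R G (φ g), of_apply R G (ψ h), coeff_add,
    Finsupp.add_apply, coeff_mul_single_apply, coeff_single_mul_apply, one_mul, mul_one, map_mul ψ,
    TwistedConj.mk_symm_inv_smul, add_comm]
  congr 2 <;> group

theorem exists_apply_of_eq_mul_sub_mul_of_isCoboundary₁ [Finite G]
    (hσof : ∀ g : G, σ (of R G g) = of R G (φ g)) (hτof : ∀ g : G, τ (of R G g) = of R G (ψ g))
    (hδ : IsCoboundary₁ (derivationCocycle φ ψ δ)) :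
    ∃ x : MonoidAlgebra R G, ∀ g, δ (of R G g) = x * τ (of R G g) - σ (of R G g) * x := by
  obtain ⟨b, hb⟩ := hδ
  refine ⟨ofCoeff (Finsupp.equivFunOnFinite.symm fun m => -b (TwistedConj.mk m)), fun g => ?_⟩
  ext m
  have hbg := congrFun (hb g) (TwistedConj.mk (m * (ψ g)⁻¹))
  have hact : g⁻¹ • TwistedConj.mk (m * (ψ g)⁻¹) =
      (TwistedConj.mk ((φ g)⁻¹ * m) : TwistedConj φ ψ) := by
    rw [← Equiv.symm_apply_eq, TwistedConj.mk_symm_inv_smul, Equiv.symm_apply_apply]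
    group
  rw [Pi.sub_apply, arrowAction_smul_apply, hact, derivationCocycle, Equiv.symm_apply_apply,
    inv_mul_cancel_right] at hbg
  rw [hσof, hτof, of_apply R G (φ g), of_apply R G (ψ g), coeff_sub, Finsupp.sub_apply,
    coeff_mul_single_apply, coeff_single_mul_apply, coeff_ofCoeff,
    Finsupp.coe_equivFunOnFinite_symm, one_mul, mul_one, ← hbg]
  abel

theorem eq_mul_sub_mul_of_apply_of {x : MonoidAlgebra R G}
    (h : ∀ g, δ (of R G g) = x * τ (of R G g) - σ (of R G g) * x) (a : MonoidAlgebra R G) :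
    δ a = x * τ a - σ a * x := by
  have : δ = LinearMap.mulLeft R x ∘ₗ τ.toLinearMap - LinearMap.mulRight R x ∘ₗ σ.toLinearMap := by
    exact lhom_ext' fun g => LinearMap.ext_ring (h g)
  exact LinearMap.congr_fun this a

end TwistedDerivation

theorem isSMulRegular_natCast_of_not_ringChar_dvd {R : Type*} [Semiring R] [IsDomain R] {n : ℕ}
    (hn : ¬ ringChar R ∣ n) : IsSMulRegular R n := by
  rw [← isSMulRegular_map (Nat.cast : ℕ → R) (Nat.cast_smul_eq_nsmul R n)]
  exact IsSMulRegular.of_ne_zero fun h => hn (ringChar.dvd h)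

theorem stmt_16_general {R G : Type*} [CommRing R] [IsDomain R] [Group G] [Fintype G]
    (hchar : ¬ (ringChar R ∣ Fintype.card G))
    (φ ψ : G →* G)
    (σ τ : MonoidAlgebra R G →ₐ[R] MonoidAlgebra R G)
    (hσof : ∀ g : G, σ (MonoidAlgebra.of R G g) = MonoidAlgebra.of R G (φ g))
    (hτof : ∀ g : G, τ (MonoidAlgebra.of R G g) = MonoidAlgebra.of R G (ψ g))
    (δ : MonoidAlgebra R G →ₗ[R] MonoidAlgebra R G)
    (hδ : ∀ a b : MonoidAlgebra R G, δ (a * b) = δ a * τ b + σ a * δ b) :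
    ∃ x : MonoidAlgebra R G, ∀ a : MonoidAlgebra R G, δ a = x * τ a - σ a * x := by
  have hcard : IsSMulRegular R (Nat.card G) := by
    rw [Nat.card_eq_fintype_card]
    exact isSMulRegular_natCast_of_not_ringChar_dvd hchar
  obtain ⟨x, hx⟩ := exists_apply_of_eq_mul_sub_mul_of_isCoboundary₁ hσof hτof
    (isCoboundary₁_of_isCocycle₁ hcard (isCocycle₁_derivationCocycle hσof hτof hδ))
  exact ⟨x, eq_mul_sub_mul_of_apply_of hx⟩

theorem stmt_16 {R G : Type*} [CommRing R] [IsDomain R] [Group G] [Fintype G]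
    (hchar : ¬ (ringChar R ∣ Fintype.card G))
    (φ ψ : G →* G)
    (σ τ : MonoidAlgebra R G →ₐ[R] MonoidAlgebra R G)
    (hσof : ∀ g : G, σ (MonoidAlgebra.of R G g) = MonoidAlgebra.of R G (φ g))
    (hτof : ∀ g : G, τ (MonoidAlgebra.of R G g) = MonoidAlgebra.of R G (ψ g))
    (hσ : ∀ z ∈ Subalgebra.center R (MonoidAlgebra R G), σ z = z)
    (hτ : ∀ z ∈ Subalgebra.center R (MonoidAlgebra R G), τ z = z)
    (δ : MonoidAlgebra R G →ₗ[R] MonoidAlgebra R G)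
    (hδ : ∀ a b : MonoidAlgebra R G, δ (a * b) = δ a * τ b + σ a * δ b) :
    ∃ x : MonoidAlgebra R G, ∀ a : MonoidAlgebra R G, δ a = x * τ a - σ a * x :=
  stmt_16_general hchar φ ψ σ τ hσof hτof δ hδ
end

section
/- Let G be a finite group and σ, τ be ℤ-linear extensions of group homomorphisms of G to endomorphisms of the integral group ring ℤG that fix the center Z(ℤG) elementwise. Then every (σ,τ)-derivation of ℤG is (σ,τ)-inner. -/
/-!
For `g ∈ G` put `f g = δ(g) τ(g)⁻¹`. The twisted Leibniz rule says exactly that `f` is a 1-cocycle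
of `G` with values in `ℤG`, on which `g` acts by `y ↦ φ(g) y ψ(g)⁻¹`. Reading off coefficients, this
module is the permutation module `ℤ^G` for the twisted conjugation action of `G` on itself, whose
first cohomology is a product over orbits of `Hom(stabilizer, ℤ) = 0`, as `G` is finite.
Concretely, the coefficient cocycle `c g k` vanishes whenever `g` fixes `k`, so `d k := c t k`,
for any `t` carrying a chosen orbit representative to `k`, is well defined and `c` is its
coboundary; then `δ` is inner with `x = ∑ₖ d(k) k`.
-/

/-- 1-cocycles of `G` with values in the `G`-module `X → A`, `(g • F) x = F ((ρ g)⁻¹ x)`. -/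
def IsFunCocycle {G X A : Type*} [Group G] [AddCommGroup A] (ρ : G →* Equiv.Perm X)
    (c : G → X → A) : Prop :=
  ∀ g h x, c (g * h) x = c g x + c h ((ρ g)⁻¹ x)

namespace IsFunCocycle

variable {G X A : Type*} [Group G] [AddCommGroup A] {ρ : G →* Equiv.Perm X} {c : G → X → A}

theorem apply_one (hc : IsFunCocycle ρ c) (x : X) : c 1 x = 0 := by
  simpa using hc 1 1 x

theorem apply_pow_of_apply_eq (hc : IsFunCocycle ρ c) {s : G} {x : X} (hs : ρ s x = x)
    (n : ℕ) : c (s ^ n) x = n • c s x := by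
  have hs' : (ρ s)⁻¹ x = x := Equiv.Perm.inv_eq_iff_eq.mpr hs.symm
  induction n with
  | zero => simp [hc.apply_one]
  | succ n ih => rw [pow_succ', hc, hs', ih, succ_nsmul']

theorem apply_eq_zero_of_apply_eq [IsAddTorsionFree A] (hc : IsFunCocycle ρ c) {s : G} {x : X}
    (hfin : IsOfFinOrder s) (hs : ρ s x = x) : c s x = 0 := by
  have h : orderOf s • c s x = 0 := by
    rw [← hc.apply_pow_of_apply_eq hs, pow_orderOf_eq_one, hc.apply_one]
  exact (nsmul_eq_zero_iff_right hfin.orderOf_pos.ne').mp h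

theorem apply_eq_of_inv_apply_eq [Finite G] [IsAddTorsionFree A] (hc : IsFunCocycle ρ c)
    {g₁ g₂ : G} {x : X} (h : (ρ g₁)⁻¹ x = (ρ g₂)⁻¹ x) : c g₁ x = c g₂ x := by
  have hfix : ρ (g₁⁻¹ * g₂) ((ρ g₁)⁻¹ x) = (ρ g₁)⁻¹ x := by
    simp [h, Equiv.Perm.mul_apply]
  rw [← mul_inv_cancel_left g₁ g₂, hc,
    hc.apply_eq_zero_of_apply_eq (isOfFinOrder_of_finite _) hfix, add_zero]

theorem exists_eq_sub [Finite G] [IsAddTorsionFree A] (hc : IsFunCocycle ρ c) :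
    ∃ d : X → A, ∀ g x, c g x = d x - d ((ρ g)⁻¹ x) := by
  let := MulAction.compHom X ρ
  have hrep (x : X) : ∃ t : G, (ρ t)⁻¹ x = (Quotient.mk (MulAction.orbitRel G X) x).out := by
    obtain ⟨t, ht⟩ := Quotient.mk_out (s := MulAction.orbitRel G X) x
    exact ⟨t⁻¹, by simpa [MulAction.compHom_smul_def, Equiv.Perm.smul_def] using ht⟩
  choose t ht using hrep
  refine ⟨fun x ↦ c (t x) x, fun g x ↦ ?_⟩
  have hsame : (ρ (t x))⁻¹ x = (ρ (g * t ((ρ g)⁻¹ x)))⁻¹ x := by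
    rw [map_mul, mul_inv_rev, Equiv.Perm.mul_apply, ht, ht]
    exact congrArg Quotient.out <| Quotient.sound
      ⟨g, by simp [MulAction.compHom_smul_def, Equiv.Perm.smul_def]⟩
  change c g x = c (t x) x - c (t _) _
  rw [hc.apply_eq_of_inv_apply_eq hsame, hc]
  abel

end IsFunCocycle

section TwistedConj

variable {G : Type*} [Group G]

def twistedConj (φ ψ : G →* G) : G →* Equiv.Perm G where
  toFun g := (Equiv.mulLeft (φ g)).trans (Equiv.mulRight (ψ g)⁻¹)
  map_one' := by ext; simp
  map_mul' g h := by ext; simp [Equiv.Perm.mul_apply, mul_assoc]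

@[simp]
theorem twistedConj_apply (φ ψ : G →* G) (g k : G) :
    twistedConj φ ψ g k = φ g * k * (ψ g)⁻¹ :=
  rfl

@[simp]
theorem twistedConj_inv_apply (φ ψ : G →* G) (g k : G) :
    (twistedConj φ ψ g)⁻¹ k = (φ g)⁻¹ * k * ψ g := by
  rw [Equiv.Perm.inv_eq_iff_eq]
  simp [mul_assoc]

end TwistedConj

namespace MonoidAlgebra

variable {R G : Type*} [Group G]

theorem of_mul_of_inv [Semiring R] (a : G) : of R G a * of R G a⁻¹ = 1 := by
  rw [← map_mul, mul_inv_cancel, map_one]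

theorem of_inv_mul_of [Semiring R] (a : G) : of R G a⁻¹ * of R G a = 1 := by
  rw [← map_mul, inv_mul_cancel, map_one]

theorem coeff_of_mul_mul_of [Semiring R] (a b : G) (y : R[G]) (k : G) :
    (of R G a * y * of R G b).coeff k = y.coeff (a⁻¹ * k * b⁻¹) := by
  simp [mul_assoc]

theorem isFunCocycle_twistedConj [Ring R] {φ ψ : G →* G} {δ : R[G] → R[G]}
    (hδ : ∀ g h,
      δ (of R G (g * h)) = δ (of R G g) * of R G (ψ h) + of R G (φ g) * δ (of R G h)) :
    IsFunCocycle (twistedConj φ ψ) fun g k ↦ (δ (of R G g) * of R G (ψ g)⁻¹).coeff k := by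
  intro g h k
  have : δ (of R G (g * h)) * of R G (ψ (g * h))⁻¹ = δ (of R G g) * of R G (ψ g)⁻¹ +
      of R G (φ g) * (δ (of R G h) * of R G (ψ h)⁻¹) * of R G (ψ g)⁻¹ := by
    rw [hδ, map_mul ψ, mul_inv_rev, map_mul (of R G) (ψ h)⁻¹, add_mul]
    simp only [mul_assoc]
    rw [← mul_assoc (of R G (ψ h)), of_mul_of_inv, one_mul]
  beta_reduce
  rw [this, coeff_add, Finsupp.add_apply, coeff_of_mul_mul_of, inv_inv, twistedConj_inv_apply]

theorem exists_eq_mul_sub_mul_of_twistedDerivation [CommRing R] [IsAddTorsionFree R] [Finite G]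
    {φ ψ : G →* G} {σ τ : R[G] →ₗ[R] R[G]}
    (hσ : ∀ g, σ (of R G g) = of R G (φ g)) (hτ : ∀ g, τ (of R G g) = of R G (ψ g))
    (δ : R[G] →ₗ[R] R[G]) (hδ : ∀ a b, δ (a * b) = δ a * τ b + σ a * δ b) :
    ∃ x : R[G], ∀ a, δ a = x * τ a - σ a * x := by
  have hδ_of g h :
      δ (of R G (g * h)) = δ (of R G g) * of R G (ψ h) + of R G (φ g) * δ (of R G h) := by
    rw [map_mul, hδ, hσ, hτ]
  obtain ⟨d, hd⟩ := (isFunCocycle_twistedConj hδ_of).exists_eq_sub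
  set x : R[G] := ofCoeff (Finsupp.equivFunOnFinite.symm d)
  have hx_of g : δ (of R G g) = x * of R G (ψ g) - of R G (φ g) * x := by
    have h : δ (of R G g) * of R G (ψ g)⁻¹ = x - of R G (φ g) * x * of R G (ψ g)⁻¹ := by
      ext k
      rw [coeff_sub, Finsupp.sub_apply, coeff_of_mul_mul_of, inv_inv, hd, twistedConj_inv_apply]
      rfl
    calc δ (of R G g) = δ (of R G g) * of R G (ψ g)⁻¹ * of R G (ψ g) := by
          rw [mul_assoc, of_inv_mul_of, mul_one]
      _ = x * of R G (ψ g) - of R G (φ g) * x := by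
          rw [h, sub_mul, mul_assoc _ (of R G (ψ g)⁻¹), of_inv_mul_of, mul_one]
  have hδ_eq : δ = LinearMap.mulLeft R x ∘ₗ τ - LinearMap.mulRight R x ∘ₗ σ :=
    lhom_ext' fun g ↦ LinearMap.ext_ring <| by
      simp only [LinearMap.comp_apply, LinearMap.sub_apply, lsingle_apply, ← of_apply,
        LinearMap.mulLeft_apply, LinearMap.mulRight_apply, hσ, hτ, hx_of]
  exact ⟨x, fun a ↦ by simpa using LinearMap.congr_fun hδ_eq a⟩

end MonoidAlgebra

theorem stmt_17_general {G : Type*} [Group G] [Fintype G]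
    (φ ψ : G →* G)
    (σ τ : MonoidAlgebra ℤ G →ₐ[ℤ] MonoidAlgebra ℤ G)
    (hσof : ∀ g : G, σ (MonoidAlgebra.of ℤ G g) = MonoidAlgebra.of ℤ G (φ g))
    (hτof : ∀ g : G, τ (MonoidAlgebra.of ℤ G g) = MonoidAlgebra.of ℤ G (ψ g))
    (δ : MonoidAlgebra ℤ G →ₗ[ℤ] MonoidAlgebra ℤ G)
    (hδ : ∀ a b : MonoidAlgebra ℤ G, δ (a * b) = δ a * τ b + σ a * δ b) :
    ∃ x : MonoidAlgebra ℤ G, ∀ a : MonoidAlgebra ℤ G, δ a = x * τ a - σ a * x :=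
  MonoidAlgebra.exists_eq_mul_sub_mul_of_twistedDerivation (σ := σ.toLinearMap)
    (τ := τ.toLinearMap) hσof hτof δ hδ

theorem stmt_17 {G : Type*} [Group G] [Fintype G]
    (φ ψ : G →* G)
    (σ τ : MonoidAlgebra ℤ G →ₐ[ℤ] MonoidAlgebra ℤ G)
    (hσof : ∀ g : G, σ (MonoidAlgebra.of ℤ G g) = MonoidAlgebra.of ℤ G (φ g))
    (hτof : ∀ g : G, τ (MonoidAlgebra.of ℤ G g) = MonoidAlgebra.of ℤ G (ψ g))
    (hσ : ∀ z ∈ Subalgebra.center ℤ (MonoidAlgebra ℤ G), σ z = z)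
    (hτ : ∀ z ∈ Subalgebra.center ℤ (MonoidAlgebra ℤ G), τ z = z)
    (δ : MonoidAlgebra ℤ G →ₗ[ℤ] MonoidAlgebra ℤ G)
    (hδ : ∀ a b : MonoidAlgebra ℤ G, δ (a * b) = δ a * τ b + σ a * δ b) :
    ∃ x : MonoidAlgebra ℤ G, ∀ a : MonoidAlgebra ℤ G, δ a = x * τ a - σ a * x :=
  stmt_17_general φ ψ σ τ hσof hτof δ hδ
end

section
/- Let G be a finite group, δ a (σ,τ)-derivation of ℤG with σ, τ ℤ-linear extensions of group homomorphisms of G fixing Z(ℤG) elementwise, and suppose x = Σ_g x_g g ∈ ℚG satisfies δ(a) = xτ(a) − σ(a)x for all a ∈ ℤG. Then for u = Σ_g {x_g} g, where {x_g} ∈ [0,1) is the fractional part of x_g, one has x − u ∈ ℤG and δ(a) = (x−u)τ(a) − σ(a)(x−u) for all a ∈ ℤG. -/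
/-!
Each relation `δ h = x τ(h) - σ(h) x` for `h ∈ G` says that `x ψ(h) - φ(h) x` has integer
coefficients, i.e. that the coefficients of `x` at `g ψ(h)⁻¹` and at `φ(h)⁻¹ g` differ by an
integer. Their fractional parts therefore agree, so the fractional part `u` of `x` satisfies
`φ(h) u = u ψ(h)` exactly, and by linearity `σ(a) u = u τ(a)` for all `a`. Hence `u` contributes
nothing to `x τ(a) - σ(a) x`, while `x - u` is the integral part of `x`.
-/

namespace MonoidAlgebra

section FloorRing

variable {k G : Type*} [Ring k] [LinearOrder k] [IsStrictOrderedRing k] [FloorRing k]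

noncomputable def fract (x : MonoidAlgebra k G) : MonoidAlgebra k G :=
  ofCoeff (Finsupp.mapRange Int.fract Int.fract_zero x.coeff)

noncomputable def floor (x : MonoidAlgebra k G) : MonoidAlgebra ℤ G :=
  ofCoeff (Finsupp.mapRange Int.floor Int.floor_zero x.coeff)

@[simp]
lemma coeff_fract (x : MonoidAlgebra k G) (g : G) : (fract x).coeff g = Int.fract (x.coeff g) :=
  rfl

@[simp]
lemma coeff_floor (x : MonoidAlgebra k G) (g : G) : (floor x).coeff g = ⌊x.coeff g⌋ :=
  rfl

lemma mapRingHom_floor [Monoid G] (x : MonoidAlgebra k G) :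
    mapRingHom G (Int.castRingHom k) (floor x) = x - fract x := by
  ext g
  simp

lemma of_mul_fract_eq_fract_mul_of [Group G] {x : MonoidAlgebra k G} {a b : G}
    (hint : x * of k G b - of k G a * x ∈ Set.range (mapRingHom G (Int.castRingHom k))) :
    of k G a * fract x = fract x * of k G b := by
  rw [coe_mapRingHom, range_map] at hint
  ext g
  obtain ⟨n, hn⟩ := hint g
  simp only [of_apply, coeff_sub, Finsupp.sub_apply, coeff_mul_single_apply,
    coeff_single_mul_apply, mul_one, one_mul, AddMonoidHom.coe_coe, eq_intCast] at hn
  simp only [of_apply, coeff_mul_single_apply, coeff_single_mul_apply, mul_one, one_mul,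
    coeff_fract]
  exact Int.fract_eq_fract.mpr ⟨-n, by rw [Int.cast_neg, hn, neg_sub]⟩

end FloorRing

lemma twisted_commute_of_forall_of {k G : Type*} [CommSemiring k] [Monoid G]
    (σ τ : MonoidAlgebra k G →ₗ[k] MonoidAlgebra k G) {u : MonoidAlgebra k G}
    (hu : ∀ g : G, σ (of k G g) * u = u * τ (of k G g)) (y : MonoidAlgebra k G) :
    σ y * u = u * τ y := by
  induction y using MonoidAlgebra.induction_linear with
  | zero => simp
  | add y z hy hz => rw [map_add, map_add, add_mul, mul_add, hy, hz]
  | single g r =>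
    rw [← mul_one r, ← smul_single', map_smul, map_smul, smul_mul_assoc, mul_smul_comm]
    exact congrArg (r • ·) (hu g)

end MonoidAlgebra

open MonoidAlgebra in
theorem stmt_19_general {G : Type*} [Group G]
    (φ ψ : G →* G)
    (σ' τ' : MonoidAlgebra ℚ G →ₐ[ℚ] MonoidAlgebra ℚ G)
    (hσ'of : ∀ g : G, σ' (MonoidAlgebra.of ℚ G g) = MonoidAlgebra.of ℚ G (φ g))
    (hτ'of : ∀ g : G, τ' (MonoidAlgebra.of ℚ G g) = MonoidAlgebra.of ℚ G (ψ g))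
    (δ : MonoidAlgebra ℤ G →ₗ[ℤ] MonoidAlgebra ℤ G)
    -- the coefficientwise cast `ι : ℤG → ℚG`
    (ι : MonoidAlgebra ℤ G → MonoidAlgebra ℚ G)
    (hι : ∀ a : MonoidAlgebra ℤ G, ι a = MonoidAlgebra.ofCoeff (Finsupp.mapRange (Int.cast : ℤ → ℚ) Int.cast_zero a.coeff))
    (x : MonoidAlgebra ℚ G)
    (hx : ∀ a : MonoidAlgebra ℤ G, ι (δ a) = x * τ' (ι a) - σ' (ι a) * x)
    (u : MonoidAlgebra ℚ G)
    (hu : u = MonoidAlgebra.ofCoeff (Finsupp.mapRange (fun q : ℚ => Int.fract q) Int.fract_zero x.coeff)) :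
    (∃ y : MonoidAlgebra ℤ G, ι y = x - u) ∧
      ∀ a : MonoidAlgebra ℤ G, ι (δ a) = (x - u) * τ' (ι a) - σ' (ι a) * (x - u) := by
  obtain rfl : ι = mapRingHom G (Int.castRingHom ℚ) := funext hι
  obtain rfl : u = fract x := hu
  have hof (h : G) : mapRingHom G (Int.castRingHom ℚ) (of ℤ G h) = of ℚ G h := by
    simp [of_apply]
  have hcomm_of (h : G) : σ' (of ℚ G h) * fract x = fract x * τ' (of ℚ G h) := by
    rw [hσ'of, hτ'of]
    refine of_mul_fract_eq_fract_mul_of ⟨δ (of ℤ G h), ?_⟩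
    rw [hx, hof, hσ'of, hτ'of]
  have hcomm := twisted_commute_of_forall_of σ'.toLinearMap τ'.toLinearMap hcomm_of
  refine ⟨⟨floor x, mapRingHom_floor x⟩, fun a => ?_⟩
  rw [hx a, sub_mul, mul_sub, ← AlgHom.toLinearMap_apply, ← AlgHom.toLinearMap_apply, hcomm]
  abel

theorem stmt_19 {G : Type*} [Group G] [Fintype G]
    (φ ψ : G →* G)
    (σ τ : MonoidAlgebra ℤ G →ₐ[ℤ] MonoidAlgebra ℤ G)
    (hσof : ∀ g : G, σ (MonoidAlgebra.of ℤ G g) = MonoidAlgebra.of ℤ G (φ g))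
    (hτof : ∀ g : G, τ (MonoidAlgebra.of ℤ G g) = MonoidAlgebra.of ℤ G (ψ g))
    (hσ : ∀ z ∈ Subalgebra.center ℤ (MonoidAlgebra ℤ G), σ z = z)
    (hτ : ∀ z ∈ Subalgebra.center ℤ (MonoidAlgebra ℤ G), τ z = z)
    (σ' τ' : MonoidAlgebra ℚ G →ₐ[ℚ] MonoidAlgebra ℚ G)
    (hσ'of : ∀ g : G, σ' (MonoidAlgebra.of ℚ G g) = MonoidAlgebra.of ℚ G (φ g))
    (hτ'of : ∀ g : G, τ' (MonoidAlgebra.of ℚ G g) = MonoidAlgebra.of ℚ G (ψ g))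
    (δ : MonoidAlgebra ℤ G →ₗ[ℤ] MonoidAlgebra ℤ G)
    (hδ : ∀ a b : MonoidAlgebra ℤ G, δ (a * b) = δ a * τ b + σ a * δ b)
    -- the coefficientwise cast `ι : ℤG → ℚG`
    (ι : MonoidAlgebra ℤ G → MonoidAlgebra ℚ G)
    (hι : ∀ a : MonoidAlgebra ℤ G, ι a = MonoidAlgebra.ofCoeff (Finsupp.mapRange (Int.cast : ℤ → ℚ) Int.cast_zero a.coeff))
    (x : MonoidAlgebra ℚ G)
    (hx : ∀ a : MonoidAlgebra ℤ G, ι (δ a) = x * τ' (ι a) - σ' (ι a) * x)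
    (u : MonoidAlgebra ℚ G)
    (hu : u = MonoidAlgebra.ofCoeff (Finsupp.mapRange (fun q : ℚ => Int.fract q) Int.fract_zero x.coeff)) :
    (∃ y : MonoidAlgebra ℤ G, ι y = x - u) ∧
      ∀ a : MonoidAlgebra ℤ G, ι (δ a) = (x - u) * τ' (ι a) - σ' (ι a) * (x - u) :=
  stmt_19_general φ ψ σ' τ' hσ'of hτ'of δ ι hι x hx u hu
end
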